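/- Let T_X be the finite set of all rooted binary tree topologies on X, let q : T_X → ℝ≥0, let X̄ ⊆ X with |X̄| ≥ 2, and define q|X̄(τ̄) = Σ_{τ ∈ T_X : τ|X̄ = τ̄} q(τ), q(s) = Σ_{τ ∈ T_X : s ∈ τ} q(τ), and q|X̄(s̄) = Σ_{τ̄ : s̄ ∈ τ̄} q|X̄(τ̄). Then for every nontrivial subsplit s̄ on X̄: q|X̄(s̄) = Σ_{s : s|X̄ = s̄} q(s), the sum ranging over subsplits s on X whose restriction to X̄ equals s̄. -/

import Mathlib

open Finset

attribute [local instance] Classical.propDecidable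

/-- A subsplit on taxa of type `α`: an unordered pair of finite subsets of taxa. -/
abbrev Subsplit (α : Type*) := Sym2 (Finset α)

/-- A parent-child subsplit pair (PCSP): a pair `(t, s)` of subsplits. -/
abbrev PCSPair (α : Type*) := Subsplit α × Subsplit α

namespace Subsplit

variable {α : Type*} [DecidableEq α]

/-- The parent clade `U(s)` of a subsplit: the union of its two child clades. -/
def clade (s : Subsplit α) : Finset α :=
  Sym2.lift ⟨fun Y Z => Y ∪ Z, fun _ _ => Finset.union_comm _ _⟩ s

/-- A subsplit is valid when its two child clades are disjoint. -/
def Valid (s : Subsplit α) : Prop :=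
  Sym2.lift ⟨fun Y Z => Disjoint Y Z, fun _ _ => propext disjoint_comm⟩ s

/-- A subsplit is nontrivial when both child clades are nonempty. -/
def Nontriv (s : Subsplit α) : Prop :=
  Sym2.lift ⟨fun Y Z => Y.Nonempty ∧ Z.Nonempty, fun _ _ => propext and_comm⟩ s

/-- Restriction of a subsplit to a taxon subset `B`. -/
def restrict (s : Subsplit α) (B : Finset α) : Subsplit α := Sym2.map (fun Y => Y ∩ B) s

end Subsplit

section Defs

variable {α : Type*} [DecidableEq α]

/-- `τ` is a rooted binary tree topology on the clade `W`. -/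
structure IsTopology (W : Finset α) (τ : Finset (Subsplit α)) : Prop where
  two_le : 2 ≤ W.card
  valid : ∀ s ∈ τ, Subsplit.Valid s
  nontriv : ∀ s ∈ τ, Subsplit.Nontriv s
  root : ∃! s, s ∈ τ ∧ Subsplit.clade s = W
  children : ∀ s ∈ τ, ∀ C ∈ s, 2 ≤ C.card → ∃! s', s' ∈ τ ∧ Subsplit.clade s' = C
  parentEx : ∀ s ∈ τ, Subsplit.clade s = W ∨ ∃ t ∈ τ, Subsplit.clade s ∈ t

/-- Restriction of a topology (set of subsplits) to taxon subset `B`: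
restrict every subsplit and keep the nontrivial results. -/
noncomputable def restrictT (τ : Finset (Subsplit α)) (B : Finset α) : Finset (Subsplit α) :=
  (τ.image (fun s => Subsplit.restrict s B)).filter (fun s => Subsplit.Nontriv s)

/-- A subsplit support on taxon set `X'`: a set of valid nontrivial subsplits on `X'`. -/
def IsSupport (X' : Finset α) (S : Set (Subsplit α)) : Prop :=
  ∀ s ∈ S, Subsplit.Valid s ∧ Subsplit.Nontriv s ∧ Subsplit.clade s ⊆ X'

/-- `S(W)`: members of `S` dividing the clade `W`, together with the trivial subsplit `{W, ∅}`. -/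
def supportAt (S : Set (Subsplit α)) (W : Finset α) : Set (Subsplit α) :=
  {s | s ∈ S ∧ Subsplit.clade s = W} ∪ {Sym2.mk W (∅ : Finset α)}

/-- The set `s₁ ⊠ s₂` of the two candidate combinations of two subsplits. -/
def boxTimes (s₁ s₂ : Subsplit α) : Set (Subsplit α) :=
  {s | ∃ Y₁ Z₁ Y₂ Z₂ : Finset α, s₁ = Sym2.mk Y₁ Z₁ ∧ s₂ = Sym2.mk Y₂ Z₂ ∧
    (s = Sym2.mk (Y₁ ∪ Y₂) (Z₁ ∪ Z₂) ∨ s = Sym2.mk (Y₁ ∪ Z₂) (Z₁ ∪ Y₂))}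

/-- Reachable clades in the mutual subsplit support construction. -/
inductive ReachClade (S₁ S₂ : Set (Subsplit α)) (X₁ X₂ : Finset α) : Finset α → Prop
  | root : ReachClade S₁ S₂ X₁ X₂ (X₁ ∪ X₂)
  | step {W : Finset α} {s₁ s₂ s : Subsplit α} {C : Finset α} :
      ReachClade S₁ S₂ X₁ X₂ W →
      s₁ ∈ supportAt S₁ (W ∩ X₁) → s₂ ∈ supportAt S₂ (W ∩ X₂) →
      s ∈ boxTimes s₁ s₂ → Subsplit.Valid s → Subsplit.Nontriv s →
      C ∈ s → 2 ≤ C.card → ReachClade S₁ S₂ X₁ X₂ C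

/-- The mutual subsplit support `M(S₁, S₂)`. -/
def mutualSupport (S₁ S₂ : Set (Subsplit α)) (X₁ X₂ : Finset α) : Set (Subsplit α) :=
  {s | ∃ W s₁ s₂, ReachClade S₁ S₂ X₁ X₂ W ∧
    s₁ ∈ supportAt S₁ (W ∩ X₁) ∧ s₂ ∈ supportAt S₂ (W ∩ X₂) ∧
    s ∈ boxTimes s₁ s₂ ∧ Subsplit.Valid s ∧ Subsplit.Nontriv s}

/-- `(t, s)` is a PCSP on taxon set `X`: `s` is a valid nontrivial subsplit, and `t` is a
subsplit (or the root placeholder `⟨X, ∅⟩`) on `X` having `U(s)` as a child clade. -/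
def IsPCSPOn (X : Finset α) (p : PCSPair α) : Prop :=
  Subsplit.Valid p.2 ∧ Subsplit.Nontriv p.2 ∧ Subsplit.Valid p.1 ∧
    Subsplit.clade p.2 ∈ p.1 ∧ Subsplit.clade p.1 ⊆ X ∧
    (Subsplit.Nontriv p.1 ∨ p.1 = Sym2.mk X (∅ : Finset α))

/-- A PCSP support on taxon set `X'`. -/
def IsPCSPSupport (X' : Finset α) (P : Set (PCSPair α)) : Prop :=
  ∀ p ∈ P, IsPCSPOn X' p

/-- The subsplits of a PCSP support: subsplits occurring in some pair of `P`,
together with the root placeholder `⟨X', ∅⟩`. -/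
def subsplitsOfP (X' : Finset α) (P : Set (PCSPair α)) : Set (Subsplit α) :=
  {u | (∃ s, (u, s) ∈ P) ∨ (∃ t, (t, u) ∈ P)} ∪ {Sym2.mk X' (∅ : Finset α)}

/-- `P(t/W)`: the subsplits `s` with `U(s) = W` and `(t → s) ∈ P`,
together with the trivial subsplit `{W, ∅}`. -/
def pcspSupportAt (P : Set (PCSPair α)) (t : Subsplit α) (W : Finset α) : Set (Subsplit α) :=
  {s | Subsplit.clade s = W ∧ (t, s) ∈ P} ∪ {Sym2.mk W (∅ : Finset α)}

/-- Reachable states `(t/W, t₁/W₁, t₂/W₂)` in the mutual PCSP support construction. -/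
inductive ReachState (P₁ P₂ : Set (PCSPair α)) (X₁ X₂ : Finset α) :
    Subsplit α → Finset α → Subsplit α → Finset α → Subsplit α → Finset α → Prop
  | root : ReachState P₁ P₂ X₁ X₂ (Sym2.mk (X₁ ∪ X₂) (∅ : Finset α)) (X₁ ∪ X₂)
      (Sym2.mk X₁ (∅ : Finset α)) X₁ (Sym2.mk X₂ (∅ : Finset α)) X₂
  | step {t : Subsplit α} {W : Finset α} {t₁ : Subsplit α} {W₁ : Finset α}
      {t₂ : Subsplit α} {W₂ : Finset α} {s₁ s₂ s u₁ u₂ : Subsplit α} {C : Finset α} :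
      ReachState P₁ P₂ X₁ X₂ t W t₁ W₁ t₂ W₂ →
      s₁ ∈ pcspSupportAt P₁ t₁ W₁ → s₂ ∈ pcspSupportAt P₂ t₂ W₂ →
      s ∈ boxTimes s₁ s₂ → Subsplit.Valid s → Subsplit.Nontriv s →
      ((Subsplit.Nontriv s₁ ∧ u₁ = s₁) ∨ (¬ Subsplit.Nontriv s₁ ∧ u₁ = t₁)) →
      ((Subsplit.Nontriv s₂ ∧ u₂ = s₂) ∨ (¬ Subsplit.Nontriv s₂ ∧ u₂ = t₂)) →
      C ∈ s → 2 ≤ C.card →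
      ReachState P₁ P₂ X₁ X₂ s C u₁ (C ∩ X₁) u₂ (C ∩ X₂)

/-- The mutual PCSP support `M(P₁, P₂)`. -/
def mutualPCSP (P₁ P₂ : Set (PCSPair α)) (X₁ X₂ : Finset α) : Set (PCSPair α) :=
  {p | ∃ W t₁ W₁ t₂ W₂ s₁ s₂, ReachState P₁ P₂ X₁ X₂ p.1 W t₁ W₁ t₂ W₂ ∧
    s₁ ∈ pcspSupportAt P₁ t₁ W₁ ∧ s₂ ∈ pcspSupportAt P₂ t₂ W₂ ∧
    p.2 ∈ boxTimes s₁ s₂ ∧ Subsplit.Valid p.2 ∧ Subsplit.Nontriv p.2}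

/-- `PathTo M a c`: there is a chain of parent-child pairs of `M` from `a` down to `c`
(possibly empty, when `a = c`). -/
inductive PathTo (M : Set (PCSPair α)) : Subsplit α → Subsplit α → Prop
  | refl (a : Subsplit α) : PathTo M a a
  | cons {a b c : Subsplit α} : (a, b) ∈ M → PathTo M b c → PathTo M a c

/-- `(t, s)` is a PCSP of the topology `τ` on `X`: `s ∈ τ` and `t` is a member of `τ`
having `U(s)` as a child clade, or the root placeholder `⟨X, ∅⟩` when `U(s) = X`. -/
def IsPCSPOf (X : Finset α) (τ : Finset (Subsplit α)) (t s : Subsplit α) : Prop :=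
  s ∈ τ ∧ ((t ∈ τ ∧ Subsplit.clade s ∈ t) ∨
    (Subsplit.clade s = X ∧ t = Sym2.mk X (∅ : Finset α)))

/-- The set of PCSPs of a topology `τ` on `X`. -/
def pcspSet (X : Finset α) (τ : Finset (Subsplit α)) : Set (PCSPair α) :=
  {p | IsPCSPOf X τ p.1 p.2}

/-- `a` is an ancestor of `s` in `τ`: `a ∈ τ` (or the root placeholder) and `U(s)` is
contained in a child clade of `a`. -/
def IsAncestor (X : Finset α) (τ : Finset (Subsplit α)) (a s : Subsplit α) : Prop :=
  (a ∈ τ ∨ a = Sym2.mk X (∅ : Finset α)) ∧ ∃ C ∈ a, Subsplit.clade s ⊆ C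

/-- `d` is a strict descendant of `a`: `U(d)` is contained in a child clade of `a`. -/
def StrictDesc (a d : Subsplit α) : Prop := ∃ C ∈ a, Subsplit.clade d ⊆ C

/-- `d` is a (valid) descendant of `a`: `d = a`, or `U(d)` is contained in a child clade
of `a`. -/
def Descend (a d : Subsplit α) : Prop := d = a ∨ ∃ C ∈ a, Subsplit.clade d ⊆ C

/-- The parent subsplit of `s` in `τ` (on taxon set `X`): the member of `τ` having `U(s)`
as a child clade if one exists, otherwise the root placeholder `⟨X, ∅⟩`. -/
noncomputable def parentIn (X : Finset α) (τ : Finset (Subsplit α)) (s : Subsplit α) :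
    Subsplit α :=
  if h : ∃ t ∈ τ, Subsplit.clade s ∈ t then h.choose else Sym2.mk X (∅ : Finset α)

/-- The finite set of PCSPs of a topology `τ` on `X`. -/
noncomputable def pcspFinset (X : Finset α) (τ : Finset (Subsplit α)) : Finset (PCSPair α) :=
  τ.image (fun s => (parentIn X τ s, s))

/-- All (valid) subsplits on the taxon set `X`. -/
noncomputable def allSubsplits (X : Finset α) : Finset (Subsplit α) :=
  ((X.powerset ×ˢ X.powerset).image (fun p => Sym2.mk p.1 p.2)).filter (fun s => Subsplit.Valid s)

/-- All nontrivial (valid) subsplits dividing the clade `W`. -/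
noncomputable def subsplitsOn (W : Finset α) : Finset (Subsplit α) :=
  (W.powerset.image (fun Y => Sym2.mk Y (W \ Y))).filter (fun s => Subsplit.Nontriv s)

/-- All nontrivial subsplits whose parent clade is a child clade of `a`. -/
noncomputable def childSubsplits (a : Subsplit α) : Finset (Subsplit α) :=
  Sym2.lift ⟨fun Y Z => subsplitsOn Y ∪ subsplitsOn Z, fun _ _ => Finset.union_comm _ _⟩ a

end Defs

section CCD

variable {α : Type*} [DecidableEq α]

/-- CCD softmax conditional probability `q(s | U(s))`. -/
noncomputable def ccdCond (v : Subsplit α → ℝ) (s : Subsplit α) : ℝ :=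
  Real.exp (v s) / ∑ s' ∈ subsplitsOn (Subsplit.clade s), Real.exp (v s')

/-- CCD probability of a topology: `q(τ) = ∏_{s ∈ τ} q(s | U(s))`. -/
noncomputable def ccdTopProb (v : Subsplit α → ℝ) (τ : Finset (Subsplit α)) : ℝ :=
  ∏ s ∈ τ, ccdCond v s

/-- Unconditional subsplit probability `q(s)`: sum of `q(τ)` over topologies `τ ∈ T`
containing `s`. -/
noncomputable def ccdSubProb (T : Finset (Finset (Subsplit α))) (v : Subsplit α → ℝ)
    (s : Subsplit α) : ℝ :=
  ∑ τ ∈ T.filter (fun τ => s ∈ τ), ccdTopProb v τ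

/-- Unconditional clade probability `q(W)`: sum of `q(τ)` over topologies `τ ∈ T` in which
the clade `W` appears (i.e. `W = X` or `W` is a child clade of some subsplit of `τ`). -/
noncomputable def ccdCladeProb (X : Finset α) (T : Finset (Finset (Subsplit α)))
    (v : Subsplit α → ℝ) (W : Finset α) : ℝ :=
  ∑ τ ∈ T.filter (fun τ => W = X ∨ ∃ s ∈ τ, W ∈ s), ccdTopProb v τ

/-- Fuel-based recursion computing the CCD conditional path probability. -/
noncomputable def ccdPathAux (v : Subsplit α → ℝ) : ℕ → Subsplit α → Subsplit α → ℝ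
  | 0, a, d => if d = a then 1 else 0
  | n + 1, a, d => if d = a then 1 else
      ∑ s'' ∈ childSubsplits a, ccdCond v s'' * ccdPathAux v n s'' d

/-- CCD conditional path probability `q(a →* d | a)`: the sum over all descending chains of
subsplits from `a` to `d` of the product of the conditional probabilities along the chain. -/
noncomputable def ccdPath (v : Subsplit α → ℝ) (a d : Subsplit α) : ℝ :=
  ccdPathAux v ((Subsplit.clade a).card + 1) a d

/-- CCD conditional path probability starting from a clade:
`q(W →* d | W) = Σ_{s'' : U(s'') = W} q(s'' | U(s'')) q(s'' →* d | s'')`. -/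
noncomputable def ccdPathFromClade (v : Subsplit α → ℝ) (W : Finset α) (d : Subsplit α) : ℝ :=
  ∑ s'' ∈ subsplitsOn W, ccdCond v s'' * ccdPath v s'' d

end CCD

section SCD

variable {α : Type*} [DecidableEq α]

/-- SCD softmax conditional probability `q(s | t)`. -/
noncomputable def scdCond (v : PCSPair α → ℝ) (t s : Subsplit α) : ℝ :=
  Real.exp (v (t, s)) / ∑ s'' ∈ subsplitsOn (Subsplit.clade s), Real.exp (v (t, s''))

/-- SCD probability of a topology `τ` on `X`: the product over PCSPs `(t → s)` of `τ` of
`q(s | t)`. -/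
noncomputable def scdTopProb (v : PCSPair α → ℝ) (X : Finset α) (τ : Finset (Subsplit α)) : ℝ :=
  ∏ s ∈ τ, scdCond v (parentIn X τ s) s

/-- Unconditional subsplit probability `q(a)` for SCD-parameterized SBNs. -/
noncomputable def scdSubProb (T : Finset (Finset (Subsplit α))) (v : PCSPair α → ℝ)
    (X : Finset α) (a : Subsplit α) : ℝ :=
  ∑ τ ∈ T.filter (fun τ => a ∈ τ), scdTopProb v X τ

/-- Fuel-based recursion computing the SCD conditional path probability. -/
noncomputable def scdPathAux (v : PCSPair α → ℝ) : ℕ → Subsplit α → Subsplit α → ℝ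
  | 0, a, d => if d = a then 1 else 0
  | n + 1, a, d => if d = a then 1 else
      ∑ s'' ∈ childSubsplits a, scdCond v a s'' * scdPathAux v n s'' d

/-- SCD conditional path probability `q(a →* d | a)`. -/
noncomputable def scdPath (v : PCSPair α → ℝ) (a d : Subsplit α) : ℝ :=
  scdPathAux v ((Subsplit.clade a).card + 1) a d

/-- SCD conditional path probability from a subsplit `t` with designated child clade `W`:
`q(t/W →* d | t/W) = Σ_{s'' : U(s'') = W} q(s'' | t) q(s'' →* d | s'')`. -/
noncomputable def scdPathFrom (v : PCSPair α → ℝ) (t : Subsplit α) (W : Finset α)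
    (d : Subsplit α) : ℝ :=
  ∑ s'' ∈ subsplitsOn W, scdCond v t s'' * scdPath v s'' d

/-- Unconditional ancestor-descendant probability `q(a →* d)`: sum of `q(τ)` over topologies
`τ ∈ T` containing both `a` and `d` with `d` a descendant of `a`. -/
noncomputable def scdPairProb (T : Finset (Finset (Subsplit α))) (v : PCSPair α → ℝ)
    (X : Finset α) (a d : Subsplit α) : ℝ :=
  ∑ τ ∈ T.filter (fun τ => a ∈ τ ∧ d ∈ τ ∧ Descend a d), scdTopProb v X τ

end SCD

/-!
A topology `τ` on `X` contributes `q τ` to the left-hand side exactly when `s̄ ∈ τ|X̄`, and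
to the right-hand side once for every `s ∈ τ` with `s|X̄ = s̄`. So it suffices that `τ|X̄` is
again a topology and that `s ↦ s|X̄` is injective on the members of `τ` with nontrivial
restriction. Both rest on laminarity: two members of `τ` are equal, one lies below a child clade
of the other, or their clades are disjoint. The member of `τ|X̄` with clade `K` is then the
restriction of the smallest member of `τ` whose clade contains `K`.
-/

namespace Subsplit

section

variable {α : Type*}

@[simp] theorem valid_mk (Y Z : Finset α) : Valid s(Y, Z) ↔ Disjoint Y Z := Iff.rfl

@[simp] theorem nontriv_mk (Y Z : Finset α) : Nontriv s(Y, Z) ↔ Y.Nonempty ∧ Z.Nonempty :=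
  Iff.rfl

theorem Valid.disjoint_of_mem {s : Subsplit α} (hs : Valid s) {C D : Finset α} (hC : C ∈ s)
    (hD : D ∈ s) (hCD : C ≠ D) : Disjoint C D := by
  obtain ⟨E, rfl⟩ := Sym2.mem_iff_exists.1 hC
  obtain rfl | rfl := Sym2.mem_iff.1 hD
  · exact absurd rfl hCD
  · exact hs

end

variable {α : Type*} [DecidableEq α]

@[simp] theorem clade_mk (Y Z : Finset α) : clade s(Y, Z) = Y ∪ Z := rfl

@[simp] theorem restrict_mk (Y Z B : Finset α) : restrict s(Y, Z) B = s(Y ∩ B, Z ∩ B) := rfl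

theorem clade_restrict (s : Subsplit α) (B : Finset α) : clade (restrict s B) = clade s ∩ B := by
  induction s using Sym2.ind with
  | _ Y Z => exact (union_inter_distrib_right Y Z B).symm

theorem subset_clade_of_mem {C : Finset α} {s : Subsplit α} (h : C ∈ s) : C ⊆ clade s := by
  obtain ⟨D, rfl⟩ := Sym2.mem_iff_exists.1 h
  exact subset_union_left

theorem Nontriv.clade_nonempty {s : Subsplit α} (h : Nontriv s) : (clade s).Nonempty := by
  induction s using Sym2.ind with
  | _ Y Z => exact h.1.mono subset_union_left

theorem valid_restrict {s : Subsplit α} (hs : Valid s) (B : Finset α) :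
    Valid (Subsplit.restrict s B) := by
  induction s using Sym2.ind with
  | _ Y Z => exact Disjoint.mono inter_subset_left inter_subset_left hs

theorem Valid.ssubset_clade_of_mem {s : Subsplit α} (hv : Valid s) (hn : Nontriv s)
    {C : Finset α} (hC : C ∈ s) : C ⊂ clade s := by
  obtain ⟨D, rfl⟩ := Sym2.mem_iff_exists.1 hC
  obtain ⟨x, hx⟩ := hn.2
  exact subset_union_left.ssubset_of_not_subset fun h =>
    disjoint_left.1 hv (h (mem_union_right C hx)) hx

theorem Valid.two_le_card_clade {s : Subsplit α} (hv : Valid s) (hn : Nontriv s) :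
    2 ≤ #(clade s) := by
  induction s using Sym2.ind with
  | _ Y Z =>
    have := hn.1.card_pos
    have := hn.2.card_pos
    rw [clade_mk, card_union_of_disjoint hv]
    omega

theorem Valid.nontriv_restrict_iff {s : Subsplit α} (hv : Valid s) {B : Finset α} :
    Nontriv (restrict s B) ↔ ∀ C ∈ s, ¬ clade s ∩ B ⊆ C := by
  induction s using Sym2.ind with
  | _ Y Z =>
    rw [valid_mk, disjoint_left] at hv
    simp only [restrict_mk, nontriv_mk, clade_mk, Sym2.mem_iff, forall_eq_or_imp, forall_eq,
      Finset.Nonempty, subset_iff, mem_inter, mem_union]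
    grind

end Subsplit

section

open Subsplit

variable {α : Type*} [DecidableEq α]

theorem mem_restrictT {τ : Finset (Subsplit α)} {B : Finset α} {u : Subsplit α} :
    u ∈ restrictT τ B ↔ Nontriv u ∧ ∃ s ∈ τ, restrict s B = u := by
  rw [restrictT, mem_filter, mem_image, and_comm]

def NestedOrDisjoint (s t : Subsplit α) : Prop :=
  Descend s t ∨ Descend t s ∨ Disjoint (clade s) (clade t)

theorem NestedOrDisjoint.of_parent {s q t : Subsplit α} (h : NestedOrDisjoint s q)
    (hq : Valid q) (htq : clade t ∈ q) (hsub : clade s ⊆ clade t → Descend t s) :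
    NestedOrDisjoint s t := by
  rcases h with (rfl | ⟨C, hC, hqC⟩) | (rfl | ⟨E, hE, hsE⟩) | hdisj
  · exact Or.inl (Or.inr ⟨_, htq, subset_rfl⟩)
  · exact Or.inl (Or.inr ⟨C, hC, (subset_clade_of_mem htq).trans hqC⟩)
  · exact Or.inl (Or.inr ⟨_, htq, subset_rfl⟩)
  · by_cases hEt : E = clade t
    · exact Or.inr (Or.inl (hsub (hEt ▸ hsE)))
    · exact Or.inr (Or.inr ((hq.disjoint_of_mem hE htq hEt).mono_left hsE))
  · exact Or.inr (Or.inr (hdisj.mono_right (subset_clade_of_mem htq)))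

namespace IsTopology

variable {W : Finset α} {τ : Finset (Subsplit α)}

theorem induction (hτ : IsTopology W τ) {P : Subsplit α → Prop}
    (root : ∀ s ∈ τ, clade s = W → P s)
    (step : ∀ s ∈ τ, ∀ p ∈ τ, clade s ∈ p → P p → P s) : ∀ s ∈ τ, P s := by
  by_contra! h
  obtain ⟨s, hs, hmax⟩ := (τ.filter (¬ P ·)).exists_max_image (fun s => #(clade s))
    (filter_nonempty_iff.2 h)
  rw [mem_filter] at hs
  rcases hτ.parentEx s hs.1 with hsW | ⟨p, hp, hsp⟩
  · exact hs.2 (root s hs.1 hsW)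
  · refine hs.2 (step s hs.1 p hp hsp (by_contra fun hPp => ?_))
    have := hmax p (mem_filter.2 ⟨hp, hPp⟩)
    have := card_lt_card ((hτ.valid p hp).ssubset_clade_of_mem (hτ.nontriv p hp) hsp)
    omega

theorem clade_subset (hτ : IsTopology W τ) {s : Subsplit α} (hs : s ∈ τ) : clade s ⊆ W :=
  hτ.induction (fun _ _ h => h.le) (fun _ _ _ _ hsp hp => (subset_clade_of_mem hsp).trans hp) s hs

theorem subset_allSubsplits (hτ : IsTopology W τ) : τ ⊆ allSubsplits W := by
  intro s hs
  have hsW := hτ.clade_subset hs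
  induction s using Sym2.ind with
  | _ Y Z =>
    refine mem_filter.2 ⟨mem_image.2 ⟨(Y, Z), mem_product.2 ⟨?_, ?_⟩, rfl⟩, hτ.valid _ hs⟩
    · exact mem_powerset.2 (subset_union_left.trans hsW)
    · exact mem_powerset.2 (subset_union_right.trans hsW)

theorem eq_of_clade_eq (hτ : IsTopology W τ) {s t : Subsplit α} (hs : s ∈ τ) (ht : t ∈ τ)
    (h : clade s = clade t) : s = t := by
  rcases hτ.parentEx s hs with hsW | ⟨p, hp, hsp⟩
  · exact hτ.root.unique ⟨hs, hsW⟩ ⟨ht, h ▸ hsW⟩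
  · obtain ⟨u, -, hu⟩ :=
      hτ.children p hp _ hsp ((hτ.valid s hs).two_le_card_clade (hτ.nontriv s hs))
    exact (hu s ⟨hs, rfl⟩).trans (hu t ⟨ht, h.symm⟩).symm

theorem descend_of_clade_subset_of_parent (hτ : IsTopology W τ) {s p t : Subsplit α}
    (hs : s ∈ τ) (ht : t ∈ τ) (hp : p ∈ τ) (hsp : clade s ∈ p) (hpt : NestedOrDisjoint p t)
    (hst : clade s ⊆ clade t) : Descend t s := by
  have hne := (hτ.nontriv s hs).clade_nonempty
  rcases hpt with (rfl | ⟨F, hF, htF⟩) | (rfl | ⟨G, hG, hpG⟩) | hdisj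
  · exact Or.inr ⟨_, hsp, subset_rfl⟩
  · have hFs : F = clade s := by
      by_contra hFs
      obtain ⟨x, hx⟩ := hne
      exact disjoint_left.1 ((hτ.valid p hp).disjoint_of_mem hF hsp hFs) (htF (hst hx)) hx
    exact Or.inl (hτ.eq_of_clade_eq hs ht (hst.antisymm (hFs ▸ htF)))
  · exact Or.inr ⟨_, hsp, subset_rfl⟩
  · exact Or.inr ⟨G, hG, (subset_clade_of_mem hsp).trans hpG⟩
  · obtain ⟨x, hx⟩ := hne
    exact absurd (hst hx) (disjoint_left.1 hdisj (subset_clade_of_mem hsp hx))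

theorem nestedOrDisjoint (hτ : IsTopology W τ) {s t : Subsplit α} (hs : s ∈ τ) (ht : t ∈ τ) :
    NestedOrDisjoint s t := by
  -- Nested induction along parents: in the inner one (on `t`), the case `clade s ⊆ clade t`
  -- is settled by the outer hypothesis for the parent of `s`.
  have of_descend : ∀ s ∈ τ, (∀ t ∈ τ, clade s ⊆ clade t → Descend t s) →
      ∀ t ∈ τ, NestedOrDisjoint s t := fun s hs hsub =>
    hτ.induction (fun t ht htW => Or.inr (Or.inl (hsub t ht (htW ▸ hτ.clade_subset hs))))
      (fun t ht q hq htq ih => ih.of_parent (hτ.valid q hq) htq (hsub t ht))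
  refine hτ.induction (P := fun s => ∀ t ∈ τ, NestedOrDisjoint s t) ?_ ?_ s hs t ht
  · exact fun s hs hsW => of_descend s hs fun t ht hst =>
      Or.inl (hτ.eq_of_clade_eq hs ht (hst.antisymm (hsW ▸ hτ.clade_subset ht)))
  · exact fun s hs p hp hsp ih => of_descend s hs fun t ht hst =>
      hτ.descend_of_clade_subset_of_parent hs ht hp hsp (ih t ht) hst

theorem strictDesc_of_clade_ssubset (hτ : IsTopology W τ) {s t : Subsplit α} (hs : s ∈ τ)
    (ht : t ∈ τ) (hst : clade s ⊂ clade t) : StrictDesc t s := by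
  rcases hτ.nestedOrDisjoint hs ht with (rfl | ⟨C, hC, htC⟩) | (rfl | h) | hdisj
  · exact absurd hst (lt_irrefl _)
  · exact absurd hst (not_ssubset_of_subset
      (htC.trans ((hτ.valid s hs).ssubset_clade_of_mem (hτ.nontriv s hs) hC).subset))
  · exact absurd hst (lt_irrefl _)
  · exact h
  · obtain ⟨x, hx⟩ := (hτ.nontriv s hs).clade_nonempty
    exact absurd (hst.subset hx) (disjoint_left.1 hdisj hx)

theorem eq_of_clade_inter_eq (hτ : IsTopology W τ) {s t : Subsplit α} {B : Finset α}
    (hs : s ∈ τ) (ht : t ∈ τ) (hsB : Nontriv (restrict s B)) (htB : Nontriv (restrict t B))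
    (h : clade s ∩ B = clade t ∩ B) : s = t := by
  rcases hτ.nestedOrDisjoint hs ht with (rfl | ⟨C, hC, htC⟩) | (rfl | ⟨C, hC, hsC⟩) | hdisj
  · rfl
  · refine absurd ?_ ((hτ.valid s hs).nontriv_restrict_iff.1 hsB C hC)
    rw [h]
    exact (inter_subset_inter_right htC).trans inter_subset_left
  · rfl
  · refine absurd ?_ ((hτ.valid t ht).nontriv_restrict_iff.1 htB C hC)
    rw [← h]
    exact (inter_subset_inter_right hsC).trans inter_subset_left
  · obtain ⟨x, hx⟩ := hsB.clade_nonempty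
    rw [clade_restrict] at hx
    exact absurd (mem_inter.1 (h ▸ hx)).1 (disjoint_left.1 hdisj (mem_inter.1 hx).1)

theorem exists_restrict_nontriv (hτ : IsTopology W τ) {s₀ : Subsplit α} (hs₀ : s₀ ∈ τ)
    {B : Finset α} (hB : 2 ≤ #(clade s₀ ∩ B)) :
    ∃ t ∈ τ, Nontriv (restrict t B) ∧ clade t ∩ B = clade s₀ ∩ B := by
  set K := clade s₀ ∩ B
  obtain ⟨t, ht, hmin⟩ := (τ.filter fun t => K ⊆ clade t ∧ clade t ⊆ clade s₀).exists_min_image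
    (fun t => #(clade t)) ⟨s₀, mem_filter.2 ⟨hs₀, inter_subset_left, subset_rfl⟩⟩
  obtain ⟨ht, hKt, hts₀⟩ := mem_filter.1 ht
  have htB : clade t ∩ B = K :=
    (inter_subset_inter_right hts₀).antisymm (subset_inter hKt inter_subset_right)
  refine ⟨t, ht, (hτ.valid t ht).nontriv_restrict_iff.2 fun C hC hKC => ?_, htB⟩
  rw [htB] at hKC
  obtain ⟨t', ht', rfl⟩ := (hτ.children t ht C hC (hB.trans (card_le_card hKC))).exists
  have := hmin t' (mem_filter.2 ⟨ht', hKC, (subset_clade_of_mem hC).trans hts₀⟩)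
  have := card_lt_card ((hτ.valid t ht).ssubset_clade_of_mem (hτ.nontriv t ht) hC)
  omega

theorem exists_parent_restrict (hτ : IsTopology W τ) {B : Finset α} (hB : B ⊆ W)
    {s : Subsplit α} (hs : s ∈ τ) (hsne : (clade s ∩ B).Nonempty) (hsB : clade s ∩ B ≠ B) :
    ∃ t ∈ τ, Nontriv (restrict t B) ∧ clade s ∩ B ∈ restrict t B := by
  obtain ⟨r, ⟨hr, hrW⟩, -⟩ := hτ.root
  have hWB : W ∩ B = B := inter_eq_right.2 hB
  have hsW : clade s ⊂ clade r := hrW ▸ (hτ.clade_subset hs).ssubset_of_ne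
    (by rintro rfl; exact hsB hWB)
  obtain ⟨t, ht, hmin⟩ :=
    (τ.filter fun t => clade s ⊂ clade t ∧ clade t ∩ B ≠ clade s ∩ B).exists_min_image
      (fun t => #(clade t)) ⟨r, mem_filter.2 ⟨hr, hsW, by rw [hrW, hWB]; exact hsB.symm⟩⟩
  obtain ⟨ht, hst, htB⟩ := mem_filter.1 ht
  obtain ⟨C, hC, hsC⟩ := hτ.strictDesc_of_clade_ssubset hs ht hst
  have hCB : C ∩ B = clade s ∩ B := by
    by_contra hCB
    have hsC' : clade s ⊂ C := hsC.ssubset_of_ne (by rintro rfl; exact hCB rfl)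
    obtain ⟨t', ht', rfl⟩ := (hτ.children t ht C hC
      (((hτ.valid s hs).two_le_card_clade (hτ.nontriv s hs)).trans (card_le_card hsC))).exists
    have := hmin t' (mem_filter.2 ⟨ht', hsC', hCB⟩)
    have := card_lt_card ((hτ.valid t ht).ssubset_clade_of_mem (hτ.nontriv t ht) hC)
    omega
  obtain ⟨D, rfl⟩ := Sym2.mem_iff_exists.1 hC
  refine ⟨_, ht, ?_, by rw [restrict_mk, ← hCB]; exact Sym2.mem_mk_left _ _⟩
  rw [restrict_mk, nontriv_mk, hCB, nonempty_iff_ne_empty (s := D ∩ B)]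
  refine ⟨hsne, fun hD => htB ?_⟩
  rw [clade_mk, union_inter_distrib_right, hD, union_empty, hCB]

theorem card_filter_restrict_eq (hτ : IsTopology W τ) {B : Finset α} {u : Subsplit α}
    (hu : Nontriv u) :
    #(τ.filter fun s => restrict s B = u) = if u ∈ restrictT τ B then 1 else 0 := by
  split_ifs with h
  · obtain ⟨-, s, hs, rfl⟩ := mem_restrictT.1 h
    refine card_eq_one.2 ⟨s, eq_singleton_iff_unique_mem.2 ⟨mem_filter.2 ⟨hs, rfl⟩, ?_⟩⟩
    intro t ht
    obtain ⟨ht, hts⟩ := mem_filter.1 ht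
    exact hτ.eq_of_clade_inter_eq ht hs (hts ▸ hu) hu
      (by rw [← clade_restrict, hts, clade_restrict])
  · exact card_eq_zero.2 <|
      filter_eq_empty_iff.2 fun s hs hsu => h (mem_restrictT.2 ⟨hu, s, hs, hsu⟩)

theorem restrict (hτ : IsTopology W τ) {B : Finset α} (hB : B ⊆ W) (hB2 : 2 ≤ #B) :
    IsTopology B (restrictT τ B) := by
  have hinj : ∀ u ∈ restrictT τ B, ∀ v ∈ restrictT τ B, clade u = clade v → u = v := by
    simp only [mem_restrictT]
    rintro _ ⟨hu, s, hs, rfl⟩ _ ⟨hv, t, ht, rfl⟩ h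
    rw [hτ.eq_of_clade_inter_eq hs ht hu hv (by rwa [clade_restrict, clade_restrict] at h)]
  have hex : ∀ s₀ ∈ τ, 2 ≤ #(clade s₀ ∩ B) →
      ∃! u, u ∈ restrictT τ B ∧ clade u = clade s₀ ∩ B := fun s₀ hs₀ h2 =>
    let ⟨t, ht, hnt, htB⟩ := hτ.exists_restrict_nontriv hs₀ h2
    existsUnique_of_exists_of_unique
      ⟨_, mem_restrictT.2 ⟨hnt, t, ht, rfl⟩, by rw [clade_restrict, htB]⟩
      fun u v hu hv => hinj u hu.1 v hv.1 (hu.2.trans hv.2.symm)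
  refine ⟨hB2, fun u hu => ?_, fun u hu => (mem_restrictT.1 hu).1, ?_, ?_, ?_⟩
  · obtain ⟨-, s, hs, rfl⟩ := mem_restrictT.1 hu
    exact valid_restrict (hτ.valid s hs) B
  · obtain ⟨r, ⟨hr, hrW⟩, -⟩ := hτ.root
    have hrB : clade r ∩ B = B := hrW ▸ inter_eq_right.2 hB
    have := hex r hr (by rwa [hrB])
    rwa [hrB] at this
  · rintro _ hu C hC hC2
    obtain ⟨-, s, hs, rfl⟩ := mem_restrictT.1 hu
    obtain ⟨D, hD, rfl⟩ := Sym2.mem_map.1 hC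
    obtain ⟨s₀, ⟨hs₀, rfl⟩, -⟩ := hτ.children s hs D hD (hC2.trans (card_le_card inter_subset_left))
    exact hex s₀ hs₀ hC2
  · rintro _ hu
    obtain ⟨hnt, s, hs, rfl⟩ := mem_restrictT.1 hu
    rw [clade_restrict]
    refine or_iff_not_imp_left.2 fun hsB => ?_
    obtain ⟨t, ht, htB, hmem⟩ := hτ.exists_parent_restrict hB hs
      (clade_restrict s B ▸ hnt.clade_nonempty) hsB
    exact ⟨_, mem_restrictT.2 ⟨htB, t, ht, rfl⟩, hmem⟩

end IsTopology

end

section Statements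

variable {α : Type*} [DecidableEq α]
theorem stmt11_general (X Xb : Finset α) (hsub : Xb ⊆ X) (hXb : 2 ≤ Xb.card)
    (T : Finset (Finset (Subsplit α))) (hT : ∀ τ, τ ∈ T ↔ IsTopology X τ)
    (Tb : Finset (Finset (Subsplit α))) (hTb : ∀ τb, τb ∈ Tb ↔ IsTopology Xb τb)
    (q : Finset (Subsplit α) → NNReal)
    (sb : Subsplit α) (hnt : Subsplit.Nontriv sb) :
    (∑ τb ∈ Tb.filter (fun τb => sb ∈ τb),
        ∑ τ ∈ T.filter (fun τ => restrictT τ Xb = τb), q τ) =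
    ∑ s ∈ (allSubsplits X).filter (fun s => Subsplit.restrict s Xb = sb),
        ∑ τ ∈ T.filter (fun τ => s ∈ τ), q τ := by
  calc _ = ∑ τ ∈ T with sb ∈ restrictT τ Xb, q τ := by
        rw [sum_fiberwise_eq_sum_filter]
        refine sum_congr (filter_congr fun τ hτ => ?_) fun _ _ => rfl
        simp [(hTb _).2 (((hT τ).1 hτ).restrict hsub hXb)]
    _ = ∑ τ ∈ T, #(τ.filter fun s => Subsplit.restrict s Xb = sb) • q τ := by
        rw [sum_filter]
        refine sum_congr rfl fun τ hτ => ?_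
        rw [((hT τ).1 hτ).card_filter_restrict_eq hnt, ite_smul, one_smul, zero_smul]
    _ = ∑ τ ∈ T, ∑ s ∈ τ with Subsplit.restrict s Xb = sb, q τ := by simp only [sum_const]
    _ = _ := by
        refine sum_comm' fun τ s => ?_
        simp only [mem_filter]
        exact ⟨fun ⟨hτ, hs, h⟩ => ⟨⟨hτ, hs⟩, ((hT τ).1 hτ).subset_allSubsplits hs, h⟩,
          fun ⟨⟨hτ, hs⟩, _, h⟩ => ⟨hτ, hs, h⟩⟩

theorem stmt11 (X Xb : Finset α) (hsub : Xb ⊆ X) (hXb : 2 ≤ Xb.card)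
    (T : Finset (Finset (Subsplit α))) (hT : ∀ τ, τ ∈ T ↔ IsTopology X τ)
    (Tb : Finset (Finset (Subsplit α))) (hTb : ∀ τb, τb ∈ Tb ↔ IsTopology Xb τb)
    (q : Finset (Subsplit α) → NNReal)
    (sb : Subsplit α) (hv : Subsplit.Valid sb) (hnt : Subsplit.Nontriv sb)
    (hcl : Subsplit.clade sb ⊆ Xb) :
    (∑ τb ∈ Tb.filter (fun τb => sb ∈ τb),
        ∑ τ ∈ T.filter (fun τ => restrictT τ Xb = τb), q τ) =
    ∑ s ∈ (allSubsplits X).filter (fun s => Subsplit.restrict s Xb = sb),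
        ∑ τ ∈ T.filter (fun τ => s ∈ τ), q τ :=
  stmt11_general X Xb hsub hXb T hT Tb hTb q sb hnt

end Statements
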